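/- arXiv:gr-qc/9906076 — 2 statements merged into one kernel-verified Lean document; each statement's English description precedes it below -/
import Mathlib

section
/- Let m > 0, k > 0, s ∈ {+1, −1}, and let R : ℝ → ℝ be differentiable with R(t) > 0. Set ω(t) = √(m² + k²/R(t)²) and define the matrix-valued function 𝒰(t) = (1/√2) [[√(1 + m/ω(t)), −s√(1 − m/ω(t))], [s√(1 − m/ω(t)), √(1 + m/ω(t))]]. Then i 𝒰(t)ᴴ (d𝒰/dt)(t) is the off-diagonal antihermitian-free matrix [[0, i s k m R'(t)/(2(m² R(t)² + k²))], [−i s k m R'(t)/(2(m² R(t)² + k²)), 0]]; in particular its diagonal entries vanish and its off-diagonal entries have modulus |k m R'(t)| / (2(m² R(t)² + k²)). -/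
/-!
With `θ = arctan (k / (m R))` one has `cos θ = m / ω`, and since `0 ≤ θ < π / 2` the
half-angle formulas show that `𝒰` is the rotation matrix of angle `φ = s θ / 2`.
For a rotation `U(φ)`, `i U(φ)ᴴ U(φ)' = φ' [[0, -i], [i, 0]]`, and differentiating
the arctangent gives `φ' = -s k m R' / (2 (m² R² + k²))`.
-/

open Matrix

/-- The mode matrix `𝒰(t)` of the Dirac field on a Robertson-Walker spacetime,
with `ω(t) = √(m² + k²/R(t)²)`. -/
noncomputable def Umat (m k s : ℝ) (R : ℝ → ℝ) (τ : ℝ) : Matrix (Fin 2) (Fin 2) ℂ :=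
  ((Real.sqrt 2)⁻¹ : ℂ) •
    !![((Real.sqrt (1 + m / Real.sqrt (m ^ 2 + k ^ 2 / R τ ^ 2)) : ℝ) : ℂ),
       ((-(s * Real.sqrt (1 - m / Real.sqrt (m ^ 2 + k ^ 2 / R τ ^ 2))) : ℝ) : ℂ);
       (((s * Real.sqrt (1 - m / Real.sqrt (m ^ 2 + k ^ 2 / R τ ^ 2))) : ℝ) : ℂ),
       ((Real.sqrt (1 + m / Real.sqrt (m ^ 2 + k ^ 2 / R τ ^ 2)) : ℝ) : ℂ)]

open Real

def rotationMatrix (p q : ℝ) : Matrix (Fin 2) (Fin 2) ℂ :=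
  !![(p : ℂ), -(q : ℂ); (q : ℂ), (p : ℂ)]

theorem I_smul_conjTranspose_rotationMatrix_mul {p q : ℝ} (h : p ^ 2 + q ^ 2 = 1) (φ' : ℝ) :
    Complex.I • ((rotationMatrix p q)ᴴ * rotationMatrix (-q * φ') (p * φ')) =
      !![0, -(Complex.I * φ'); Complex.I * φ', 0] := by
  have h' : (p : ℂ) ^ 2 + (q : ℂ) ^ 2 = 1 := by exact_mod_cast h
  -- with `φ' = (p² + q²) φ'` every entry becomes a polynomial identity
  conv_rhs => rw [← one_mul (φ' : ℂ), ← h']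
  ext i j
  fin_cases i <;> fin_cases j <;> simp [rotationMatrix, Matrix.mul_apply, Fin.sum_univ_two] <;> ring

theorem eq_rotationMatrix_of_hasDerivAt {p q : ℝ → ℝ} {p' q' t : ℝ}
    {U' : Matrix (Fin 2) (Fin 2) ℂ} (hp : HasDerivAt p p' t) (hq : HasDerivAt q q' t)
    (hU' : ∀ i j, HasDerivAt (fun τ => rotationMatrix (p τ) (q τ) i j) (U' i j) t) :
    U' = rotationMatrix p' q' := by
  ext i j
  fin_cases i <;> fin_cases j
  all_goals refine (hU' _ _).unique ?_
  · simpa [rotationMatrix] using hp.ofReal_comp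
  · simpa [rotationMatrix] using hq.ofReal_comp.fun_neg
  · simpa [rotationMatrix] using hq.ofReal_comp
  · simpa [rotationMatrix] using hp.ofReal_comp

theorem div_sqrt_sq_add_div_sq_eq_cos_arctan {m r : ℝ} (k : ℝ) (hm : 0 < m) (hr : r ≠ 0) :
    m / √(m ^ 2 + k ^ 2 / r ^ 2) = cos (arctan (k / (m * r))) := by
  have h : m ^ 2 + k ^ 2 / r ^ 2 = m ^ 2 * (1 + (k / (m * r)) ^ 2) := by
    field_simp
  rw [cos_arctan, h, sqrt_mul (sq_nonneg m), sqrt_sq hm.le]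
  field_simp

theorem inv_sqrt_two_mul_sqrt_one_add_cos {θ : ℝ} (h₁ : -π ≤ θ) (h₂ : θ ≤ π) :
    (√2)⁻¹ * √(1 + cos θ) = cos (θ / 2) := by
  rw [cos_half h₁ h₂, sqrt_div' _ zero_le_two, inv_mul_eq_div]

theorem inv_sqrt_two_mul_sqrt_one_sub_cos {θ : ℝ} (h₁ : 0 ≤ θ) (h₂ : θ ≤ 2 * π) :
    (√2)⁻¹ * √(1 - cos θ) = sin (θ / 2) := by
  rw [sin_half_eq_sqrt h₁ h₂, sqrt_div' _ zero_le_two, inv_mul_eq_div]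

theorem Umat_eq_rotationMatrix {m k s : ℝ} {R : ℝ → ℝ} {τ : ℝ} (hm : 0 < m)
    (hk : 0 ≤ k) (hs : s = 1 ∨ s = -1) (hR : 0 < R τ) :
    Umat m k s R τ = rotationMatrix (cos (s * arctan (k / (m * R τ)) / 2))
      (sin (s * arctan (k / (m * R τ)) / 2)) := by
  set θ := arctan (k / (m * R τ))
  have hθ₀ : 0 ≤ θ := arctan_nonneg.2 (by positivity)
  have hθπ : θ ≤ π := by linarith [arctan_lt_pi_div_two (k / (m * R τ)), pi_pos]
  have hcos : cos (s * θ / 2) = cos (θ / 2) := by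
    rcases hs with rfl | rfl <;> simp [neg_div]
  have hsin : sin (s * θ / 2) = s * sin (θ / 2) := by
    rcases hs with rfl | rfl <;> simp [neg_div]
  rw [hcos, hsin, Umat, div_sqrt_sq_add_div_sq_eq_cos_arctan k hm hR.ne',
    ← inv_sqrt_two_mul_sqrt_one_add_cos (by linarith) hθπ,
    ← inv_sqrt_two_mul_sqrt_one_sub_cos hθ₀ (by linarith)]
  ext i j
  fin_cases i <;> fin_cases j <;> simp [rotationMatrix] <;> ring

theorem hasDerivAt_arctan_div_mul {m k r' t : ℝ} {R : ℝ → ℝ} (hm : m ≠ 0) (hR : R t ≠ 0)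
    (hR' : HasDerivAt R r' t) :
    HasDerivAt (fun τ => arctan (k / (m * R τ)))
      (-(k * m * r') / (m ^ 2 * R t ^ 2 + k ^ 2)) t := by
  have hmR : m * R t ≠ 0 := mul_ne_zero hm hR
  have hden : m ^ 2 * R t ^ 2 + k ^ 2 ≠ 0 := by positivity
  convert ((hasDerivAt_const t k).fun_div (hR'.const_mul m) hmR).arctan using 1
  field_simp
  ring

/-- `i 𝒰(t)ᴴ 𝒰'(t)` is the off-diagonal matrix
`[[0, iskm R'(t)/(2(m²R(t)²+k²))], [−iskm R'(t)/(2(m²R(t)²+k²)), 0]]`;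
in particular its diagonal entries vanish and its off-diagonal entries have
modulus `|kmR'(t)|/(2(m²R(t)²+k²))`. -/
theorem stmt_5 (m k s : ℝ) (hm : 0 < m) (hk : 0 < k) (hs : s = 1 ∨ s = -1)
    (R : ℝ → ℝ) (hRpos : ∀ τ, 0 < R τ) (t r' : ℝ) (hR' : HasDerivAt R r' t)
    (U' : Matrix (Fin 2) (Fin 2) ℂ)
    (hU' : ∀ i j, HasDerivAt (fun τ => Umat m k s R τ i j) (U' i j) t) :
    Complex.I • ((Umat m k s R t)ᴴ * U') =
      !![0, Complex.I * ((s * k * m * r' / (2 * (m ^ 2 * R t ^ 2 + k ^ 2)) : ℝ) : ℂ);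
         -(Complex.I * ((s * k * m * r' / (2 * (m ^ 2 * R t ^ 2 + k ^ 2)) : ℝ) : ℂ)), 0] ∧
    (Complex.I • ((Umat m k s R t)ᴴ * U')) 0 0 = 0 ∧
    (Complex.I • ((Umat m k s R t)ᴴ * U')) 1 1 = 0 ∧
    ‖(Complex.I • ((Umat m k s R t)ᴴ * U')) 0 1‖ =
      |k * m * r'| / (2 * (m ^ 2 * R t ^ 2 + k ^ 2)) ∧
    ‖(Complex.I • ((Umat m k s R t)ᴴ * U')) 1 0‖ =
      |k * m * r'| / (2 * (m ^ 2 * R t ^ 2 + k ^ 2)) := by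
  set φ : ℝ → ℝ := fun τ => s * arctan (k / (m * R τ)) / 2
  have hφ : HasDerivAt φ (-(s * k * m * r' / (2 * (m ^ 2 * R t ^ 2 + k ^ 2)))) t := by
    refine (((hasDerivAt_arctan_div_mul hm.ne' (hRpos t).ne' hR').const_mul s).div_const
      2).congr_deriv ?_
    field_simp
  have hU : ∀ τ, Umat m k s R τ = rotationMatrix (cos (φ τ)) (sin (φ τ)) := fun τ =>
    Umat_eq_rotationMatrix hm hk.le hs (hRpos τ)
  simp only [hU] at hU' ⊢
  rw [eq_rotationMatrix_of_hasDerivAt hφ.cos hφ.sin hU',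
    I_smul_conjTranspose_rotationMatrix_mul (cos_sq_add_sin_sq _)]
  have hv : |s * k * m * r' / (2 * (m ^ 2 * R t ^ 2 + k ^ 2))| =
      |k * m * r'| / (2 * (m ^ 2 * R t ^ 2 + k ^ 2)) := by
    have hs1 : |s| = 1 := by rcases hs with rfl | rfl <;> simp
    rw [abs_div, abs_of_pos (show 0 < 2 * (m ^ 2 * R t ^ 2 + k ^ 2) by positivity)]
    simp only [abs_mul, hs1, one_mul]
  generalize s * k * m * r' / (2 * (m ^ 2 * R t ^ 2 + k ^ 2)) = v at hv ⊢
  simp [hv]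
end

section
/- Let N ≥ 1, let Q be the Minkowski quadratic form on V = ℂ^{N+1} given by Q(ξ) = ξ₀² − ξ₁² − ⋯ − ξ_N², and let ι : V → Cl(Q) be the canonical embedding of V into the Clifford algebra of Q. Suppose ξ ∈ V with ξ ≠ 0 and Q(ξ) = 0 (ξ is a nonzero null vector), and suppose w = c·1 + ι(β) ∈ Cl(Q) for some c ∈ ℂ and β ∈ V satisfies ι(ξ) · w = 0 and w · ι(ξ) = 0. Then c = 0 and β = λ ξ for some λ ∈ ℂ. -/
open CliffordAlgebra

/-- Separation of the scalar and vector parts in a Clifford algebra over `ℂ`. -/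
theorem clifford_sep {n : ℕ} (Q : QuadraticForm ℂ (Fin n → ℂ)) (r : ℂ) (m : Fin n → ℂ)
    (h : algebraMap ℂ (CliffordAlgebra Q) r + CliffordAlgebra.ι Q m = 0) :
    r = 0 ∧ m = 0 := by
  have h2 := congrArg (CliffordAlgebra.equivExterior Q) h
  rw [map_add, map_zero] at h2
  rw [CliffordAlgebra.equivExterior, CliffordAlgebra.changeFormEquiv_apply,
    CliffordAlgebra.changeFormEquiv_apply, CliffordAlgebra.changeForm_algebraMap,
    CliffordAlgebra.changeForm_ι] at h2
  have hr : r = 0 := by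
    have h3 := congrArg (ExteriorAlgebra.algebraMapInv) h2
    simpa [ExteriorAlgebra.algebraMapInv] using h3
  subst hr
  simp only [map_zero, zero_add] at h2
  exact ⟨rfl, (ExteriorAlgebra.ι_eq_zero_iff (R := ℂ) m).mp h2⟩

/-- In the Clifford algebra of the Minkowski quadratic form
`Q(ξ) = ξ₀² − ξ₁² − ⋯ − ξ_N²` on `ℂ^{N+1}`, if `ξ` is a nonzero null vector and
`w = c·1 + β̸` satisfies `ξ̸ w = w ξ̸ = 0`, then `c = 0` and `β = λ ξ`. -/
theorem stmt_6 (N : ℕ) (hN : 1 ≤ N)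
    (Q : QuadraticForm ℂ (Fin (N + 1) → ℂ))
    (hQ : Q = QuadraticMap.weightedSumSquares ℂ
      (fun i : Fin (N + 1) => if i = 0 then (1 : ℂ) else -1))
    (c : ℂ) (ξ β : Fin (N + 1) → ℂ)
    (hξ : ξ ≠ 0) (hnull : Q ξ = 0)
    (hl : CliffordAlgebra.ι Q ξ *
      (algebraMap ℂ (CliffordAlgebra Q) c + CliffordAlgebra.ι Q β) = 0)
    (hr : (algebraMap ℂ (CliffordAlgebra Q) c + CliffordAlgebra.ι Q β) *
      CliffordAlgebra.ι Q ξ = 0) :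
    c = 0 ∧ ∃ l : ℂ, β = l • ξ := by
  rw [mul_add] at hl
  rw [add_mul] at hr
  -- step 1: extract `c = 0` and `polar Q ξ β = 0`
  have hsum : algebraMap ℂ (CliffordAlgebra Q) (QuadraticMap.polar Q ξ β) +
      CliffordAlgebra.ι Q ((2 * c) • ξ) = 0 := by
    have hadd := congrArg₂ (· + ·) hl hr
    simp only [add_zero] at hadd
    rw [LinearMap.map_smul, ← CliffordAlgebra.ι_mul_ι_add_swap, ← hadd,
      ← Algebra.commutes c (CliffordAlgebra.ι Q ξ), ← Algebra.smul_def, two_mul, add_smul]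
    abel
  obtain ⟨hpol, hsm⟩ := clifford_sep Q _ _ hsum
  have hc : c = 0 := by
    rcases smul_eq_zero.mp hsm with h | h
    · have : (2 : ℂ) ≠ 0 := two_ne_zero
      exact (mul_eq_zero.mp h).resolve_left this
    · exact absurd h hξ
  subst hc
  simp only [map_zero, mul_zero, zero_mul, zero_add] at hl hr
  refine ⟨rfl, ?_⟩
  -- step 2: pick a coordinate where ξ is nonzero, and a dual vector η
  obtain ⟨i, hi⟩ := Function.ne_iff.mp hξ
  simp only [Pi.zero_apply] at hi
  set w : Fin (N + 1) → ℂ := fun j => if j = 0 then (1 : ℂ) else -1 with hw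
  set η : Fin (N + 1) → ℂ := Pi.single i 1 with hη
  set a : ℂ := 2 * w i * ξ i with ha
  have hwi : w i ≠ 0 := by
    rw [hw]; dsimp only; split <;> norm_num
  have haa : a ≠ 0 := by
    rw [ha]
    exact mul_ne_zero (mul_ne_zero two_ne_zero hwi) hi
  have hpη : QuadraticMap.polar Q ξ η = a := by
    rw [ha, QuadraticMap.polar, hQ]
    simp only [QuadraticMap.weightedSumSquares_apply, smul_eq_mul, Pi.add_apply,
      ← Finset.sum_sub_distrib]
    rw [Finset.sum_eq_single i]
    · simp only [hη, Pi.single_eq_same, hw]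
      ring
    · intro j _ hj
      simp only [hη, Pi.single_apply, if_neg hj]
      ring
    · simp
  -- step 3: the key algebraic identity
  set p : ℂ := QuadraticMap.polar Q η β with hp
  have hswap1 : CliffordAlgebra.ι Q ξ * CliffordAlgebra.ι Q η +
      CliffordAlgebra.ι Q η * CliffordAlgebra.ι Q ξ = algebraMap ℂ _ a := by
    rw [CliffordAlgebra.ι_mul_ι_add_swap, hpη]
  have hswap2 : CliffordAlgebra.ι Q η * CliffordAlgebra.ι Q β =
      algebraMap ℂ _ p - CliffordAlgebra.ι Q β * CliffordAlgebra.ι Q η :=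
    CliffordAlgebra.ι_mul_ι_comm η β
  have hkey : algebraMap ℂ (CliffordAlgebra Q) a * CliffordAlgebra.ι Q β =
      algebraMap ℂ (CliffordAlgebra Q) p * CliffordAlgebra.ι Q ξ := by
    rw [← hswap1, add_mul, mul_assoc, mul_assoc, hl, mul_zero, add_zero, hswap2, mul_sub,
      ← mul_assoc, hl, zero_mul, sub_zero, ← Algebra.commutes p (CliffordAlgebra.ι Q ξ)]
  have hιz : algebraMap ℂ (CliffordAlgebra Q) (0 : ℂ) +
      CliffordAlgebra.ι Q (a • β - p • ξ) = 0 := by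
    rw [map_zero, zero_add, map_sub, LinearMap.map_smul, LinearMap.map_smul,
      Algebra.smul_def, Algebra.smul_def, hkey, sub_self]
  have hz := (clifford_sep Q 0 _ hιz).2
  have hab : a • β = p • ξ := sub_eq_zero.mp hz
  refine ⟨a⁻¹ * p, ?_⟩
  rw [mul_smul, ← hab, smul_smul, inv_mul_cancel₀ haa, one_smul]
end
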